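/- Let G' be a directed graph obtained from a graph H by adding a source vertex i with edges (i,v) for each vertex v of H, where ℓ(i,v) is an upper bound on the true distance D(v) we wish to compute, and suppose for each v either ℓ(i,v) = D(v) or there exists a neighbor path realizing D(v) through edges of H from some u with ℓ(i,u) = D(u). Then the shortest-path distance from i to v in G' equals D(v) for every v, provided D satisfies D(v) ≤ D(u) + ℓ(u,v) for all edges (u,v) of H and for each v either ℓ(i,v) = D(v) or D(v) = D(u) + ℓ(u,v) for some edge (u,v) with ℓ(i,u) = D(u). -/

import Mathlib

/-!
The walks `i → v` and `i → u → v` give `dist(i, v) ≤ D v`. Conversely, `D` extended by `0` at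
`i` is a feasible potential on `G'` (on the new edges because `D v ≤ ℓ(i, v)`), and a feasible
potential grows along any walk by at most the walk's length, so `D v ≤ dist(i, v)`.
-/

def IsWalk {V : Type*} (E : V → V → Prop) (s : V) (p : List V) (t : V) : Prop :=
  p.head? = some s ∧ p.getLast? = some t ∧ p.Chain' E

def pathLen {V : Type*} (ℓ : V → V → NNReal) (p : List V) : NNReal :=
  ((p.zip p.tail).map fun q => ℓ q.1 q.2).sum

noncomputable def gdist {V : Type*} (E : V → V → Prop) (ℓ : V → V → NNReal)
    (s t : V) : ENNReal :=
  ⨅ (p : List V) (_ : IsWalk E s p t), (pathLen ℓ p : ENNReal)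

/-- The augmentation of a graph by a fresh source with an edge to every vertex. -/
def augE {V : Type*} (E : V → V → Prop) : Option V → Option V → Prop :=
  fun a b => match a, b with
    | some u, some v => E u v
    | none, some _ => True
    | _, none => False

/-- Lengths in the augmented graph: edges from the source i have length c(v). -/
def augL {V : Type*} (ℓ : V → V → NNReal) (c : V → NNReal) :
    Option V → Option V → NNReal :=
  fun a b => match a, b with
    | some u, some v => ℓ u v
    | none, some v => c v
    | _, none => 0

section Walks

variable {V : Type*} {E : V → V → Prop} {ℓ : V → V → NNReal}

@[simp]
lemma pathLen_singleton (a : V) : pathLen ℓ [a] = 0 := by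
  simp [pathLen]

@[simp]
lemma pathLen_cons_cons (a b : V) (p : List V) :
    pathLen ℓ (a :: b :: p) = ℓ a b + pathLen ℓ (b :: p) := by
  simp [pathLen]

lemma isWalk_cons_cons_iff {s t a b : V} {p : List V} :
    IsWalk E s (a :: b :: p) t ↔ s = a ∧ E a b ∧ IsWalk E b (b :: p) t := by
  simp only [IsWalk, List.head?_cons, Option.some.injEq, List.getLast?_cons_cons, List.Chain',
    List.isChain_cons_cons]
  tauto

lemma IsWalk.eq_of_singleton {s t a : V} (h : IsWalk E s [a] t) : s = a ∧ t = a := by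
  obtain ⟨hs, ht, -⟩ := h
  simp_all [eq_comm]

lemma isWalk_singleton (a : V) : IsWalk E a [a] a :=
  ⟨rfl, rfl, List.isChain_singleton a⟩

lemma IsWalk.le_add_pathLen {π : V → NNReal} (hπ : ∀ a b, E a b → π b ≤ π a + ℓ a b)
    {s t : V} {p : List V} (hp : IsWalk E s p t) : π t ≤ π s + pathLen ℓ p := by
  induction p generalizing s with
  | nil => simp [IsWalk] at hp
  | cons a p ih =>
    cases p with
    | nil =>
      obtain ⟨rfl, rfl⟩ := hp.eq_of_singleton
      simp
    | cons b p =>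
      obtain ⟨rfl, hab, hp⟩ := isWalk_cons_cons_iff.mp hp
      calc π t ≤ π b + pathLen ℓ (b :: p) := ih hp
        _ ≤ π s + ℓ s b + pathLen ℓ (b :: p) := by gcongr; exact hπ s b hab
        _ = π s + pathLen ℓ (s :: b :: p) := by rw [pathLen_cons_cons, add_assoc]

lemma gdist_le_pathLen {s t : V} {p : List V} (hp : IsWalk E s p t) :
    gdist E ℓ s t ≤ pathLen ℓ p :=
  iInf₂_le p hp

lemma le_add_gdist {π : V → NNReal} (hπ : ∀ a b, E a b → π b ≤ π a + ℓ a b) (s t : V) :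
    (π t : ENNReal) ≤ π s + gdist E ℓ s t := by
  simp only [gdist, ENNReal.add_iInf]
  exact le_iInf₂ fun p hp => by exact_mod_cast hp.le_add_pathLen hπ

end Walks

section Augmentation

variable {V : Type*} {E : V → V → Prop} {ℓ : V → V → NNReal} {c : V → NNReal}

lemma gdist_aug_le_source_edge (v : V) : gdist (augE E) (augL ℓ c) none (some v) ≤ c v := by
  simpa [augL] using
    gdist_le_pathLen (ℓ := augL ℓ c) (isWalk_cons_cons_iff.mpr ⟨rfl, trivial, isWalk_singleton _⟩)

lemma gdist_aug_le_source_edge_add {u v : V} (huv : E u v) :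
    gdist (augE E) (augL ℓ c) none (some v) ≤ c u + ℓ u v := by
  have hwalk : IsWalk (augE E) none [none, some u, some v] (some v) :=
    isWalk_cons_cons_iff.mpr ⟨rfl, trivial,
      isWalk_cons_cons_iff.mpr ⟨rfl, huv, isWalk_singleton _⟩⟩
  simpa [augL] using gdist_le_pathLen (ℓ := augL ℓ c) hwalk

lemma augL_feasible {D : V → NNReal} (hub : ∀ v, D v ≤ c v)
    (hfeas : ∀ u v, E u v → D v ≤ D u + ℓ u v) :
    ∀ a b, augE E a b → Option.elim b 0 D ≤ Option.elim a 0 D + augL ℓ c a b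
  | some u, some v, h => hfeas u v h
  | none, some v, _ => by simpa [augL] using hub v

end Augmentation

theorem aug_sssp_recovers_D_general {V : Type*} (E : V → V → Prop)
    (ℓ : V → V → NNReal) (D c : V → NNReal)
    (hub : ∀ v, D v ≤ c v)
    (hfeas : ∀ u v, E u v → D v ≤ D u + ℓ u v)
    (hreal : ∀ v, c v = D v ∨ ∃ u, E u v ∧ D v = D u + ℓ u v ∧ c u = D u) :
    ∀ v, gdist (augE E) (augL ℓ c) none (some v) = (D v : ENNReal) := by
  intro v
  refine le_antisymm ?_ ?_
  · rcases hreal v with hcv | ⟨u, huv, hD, hcu⟩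
    · calc _ ≤ (c v : ENNReal) := gdist_aug_le_source_edge v
        _ = D v := by rw [hcv]
    · calc _ ≤ (c u + ℓ u v : ENNReal) := gdist_aug_le_source_edge_add huv
        _ = D v := by rw [hcu, hD, ENNReal.coe_add]
  · simpa using le_add_gdist (augL_feasible hub hfeas) none (some v)

/-- Abstract version of Lemmas 1–2: if the edges (i,v) overestimate D, D is
feasible on H, and for each v either ℓ(i,v) = D(v) or D(v) is realized through
a neighbor u with ℓ(i,u) = D(u), then SSSP from i on G' recovers D. -/
theorem aug_sssp_recovers_D {V : Type*} [Fintype V] (E : V → V → Prop)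
    (ℓ : V → V → NNReal) (D c : V → NNReal)
    (hub : ∀ v, D v ≤ c v)
    (hfeas : ∀ u v, E u v → D v ≤ D u + ℓ u v)
    (hreal : ∀ v, c v = D v ∨ ∃ u, E u v ∧ D v = D u + ℓ u v ∧ c u = D u) :
    ∀ v, gdist (augE E) (augL ℓ c) none (some v) = (D v : ENNReal) :=
  aug_sssp_recovers_D_general E ℓ D c hub hfeas hreal
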